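/- arXiv:math/0404278 — 5 statements merged into one kernel-verified Lean document; each statement's English description precedes it below -/
import Mathlib

section
/- Let S be a set with at least two elements, and let a ∈ S. In the free Lie algebra L[S] over ℤ generated by S, the centralizer of a (the set of x with [x,a] = 0) is exactly the ℤ-linear span of a. -/
/-!
Lazard elimination. For `x ∈ S` let `K = ℕ × (S ∖ {x})`, with `(n, b)` playing the role of
`(ad x)ⁿ b`, and let `1 ∈ ℤ` act on `L[K]` by the derivation `d : (n, b) ↦ (n + 1, b)`. Sending
`x ↦ (0, 1)` and `b ↦ ((0, b), 0)` embeds `L[S]` into the semidirect sum `L[K] ⋊ ℤ`: the map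
`(κ, c) ↦ c • x + γ κ`, where `γ (n, b) = (ad x)ⁿ b`, is a left inverse, and it is a Lie morphism
because `γ ∘ d = ad x ∘ γ`.
In `L[K] ⋊ ℤ` we have `⁅(κ, c), (0, 1)⁆ = (-d κ, 0)`, so the centralizer of `x` is `ℤ x` as soon as
`d` is injective.

For the lowering derivation `e : (n, b) ↦ n (n - 1, b)`, `e d - d e` is multiplication by `r` on
brackets of length `r`, and `e` is locally nilpotent. The `sl₂` argument then shows `ker d = 0`,
provided `L[K]` is torsion-free. Torsion-freeness of free Lie rings comes from the same
elimination, by induction on the length: a multihomogeneous component of length `k` in which `x`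
occurs `m ≥ 1` times is sent to an element of length `k - m` in `L[K]`.
-/

open FreeLieAlgebra

universe u

theorem Module.End.eq_zero_of_commutator_eq_smul {V : Type*} [AddCommGroup V]
    [IsAddTorsionFree V] {d e : Module.End ℤ V} {r : ℤ} (hr : r ≠ 0) {S : Submodule ℤ V}
    (heS : ∀ v ∈ S, e v ∈ S) (hed : ∀ v ∈ S, e (d v) - d (e v) = r • v) {u : V} (hu : u ∈ S)
    (hdu : d u = 0) (hnil : ∃ N, (e ^ N) u = 0) : u = 0 := by
  have hS (j : ℕ) : (e ^ j) u ∈ S := by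
    induction j with
    | zero => exact hu
    | succ j ih => rw [pow_succ', Module.End.mul_apply]; exact heS _ ih
  have hd (j : ℕ) : d ((e ^ (j + 1)) u) = -((j + 1 : ℤ) * r) • (e ^ j) u := by
    induction j with
    | zero =>
      have h := hed u hu
      rw [hdu, map_zero] at h
      simp only [zero_add, pow_one, pow_zero, Module.End.one_apply, Nat.cast_zero, one_mul]
      linear_combination (norm := module) -h
    | succ j ih =>
      have h := hed _ (hS (j + 1))
      rw [ih, map_smul, ← Module.End.mul_apply, ← pow_succ'] at h
      rw [pow_succ' e (j + 1), Module.End.mul_apply]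
      push_cast
      linear_combination (norm := module) -h
  obtain ⟨N, hN⟩ := hnil
  induction N with
  | zero => simpa using hN
  | succ N ih =>
    refine ih ?_
    have := hd N
    rw [hN, map_zero, eq_comm, smul_eq_zero] at this
    exact this.resolve_left (neg_ne_zero.2 (mul_ne_zero (by positivity) hr))

/-- The Lie ring `M[ε] = M ⊗ ℤ[ε]/(ε²)`, with `(a, b)` standing for `a + b ε`. -/
def DualExt (M : Type*) := M × M

namespace DualExt

variable {M : Type*} [LieRing M]

instance : AddCommGroup (DualExt M) := inferInstanceAs (AddCommGroup (M × M))

def lie (p q : M × M) : M × M := (⁅p.1, q.1⁆, ⁅p.1, q.2⁆ + ⁅p.2, q.1⁆)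

instance : Bracket (DualExt M) (DualExt M) := ⟨lie⟩

private theorem add_lie' (p q r : M × M) : lie (p + q) r = lie p r + lie q r :=
  Prod.ext (add_lie _ _ _) (by simp only [lie, Prod.fst_add, Prod.snd_add, add_lie]; abel)

private theorem lie_add' (p q r : M × M) : lie p (q + r) = lie p q + lie p r :=
  Prod.ext (lie_add _ _ _) (by simp only [lie, Prod.fst_add, Prod.snd_add, lie_add]; abel)

private theorem lie_self' (p : M × M) : lie p p = 0 :=
  Prod.ext (lie_self _) (by simp only [lie, ← lie_skew p.2 p.1, add_neg_cancel, Prod.snd_zero])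

private theorem leibniz_lie' (p q r : M × M) :
    lie p (lie q r) = lie (lie p q) r + lie q (lie p r) :=
  Prod.ext (leibniz_lie _ _ _) (by simp only [lie, Prod.snd_add, lie_add, add_lie, lie_lie]; abel)

instance : LieRing (DualExt M) where
  add_lie := add_lie'
  lie_add := lie_add'
  lie_self := lie_self'
  leibniz_lie := leibniz_lie'

def fst : DualExt M →ₗ⁅ℤ⁆ M where
  toFun p := p.1
  map_add' _ _ := rfl
  map_smul' _ _ := rfl
  map_lie' := rfl

end DualExt

namespace FreeLieAlgebra

variable {X : Type*}

theorem lieSpan_range_of :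
    LieSubalgebra.lieSpan ℤ (FreeLieAlgebra ℤ X) (Set.range (of ℤ)) = ⊤ := by
  set A := LieSubalgebra.lieSpan ℤ (FreeLieAlgebra ℤ X) (Set.range (of ℤ))
  let s : FreeLieAlgebra ℤ X →ₗ⁅ℤ⁆ A :=
    lift ℤ fun x => ⟨of ℤ x, LieSubalgebra.subset_lieSpan ⟨x, rfl⟩⟩
  have hs : A.incl.comp s = LieHom.id :=
    hom_ext fun x => congrArg A.incl (lift_of_apply (R := ℤ) (L := A) _ x)
  refine eq_top_iff.2 fun y _ => ?_
  have hy : A.incl (s y) = y := by rw [← LieHom.comp_apply, hs, LieHom.id_apply]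
  exact hy ▸ (s y).2

theorem map_derivation_eq {M : Type*} [LieRing M] (φ : FreeLieAlgebra ℤ X →ₗ⁅ℤ⁆ M)
    (D : LieDerivation ℤ (FreeLieAlgebra ℤ X) (FreeLieAlgebra ℤ X)) (E : LieDerivation ℤ M M)
    (h : ∀ s, φ (D (of ℤ s)) = E (φ (of ℤ s))) (y : FreeLieAlgebra ℤ X) :
    φ (D y) = E (φ y) := by
  have hy : y ∈ LieSubalgebra.lieSpan ℤ _ (Set.range (of ℤ)) := by
    rw [lieSpan_range_of]; trivial
  induction hy using LieSubalgebra.lieSpan_induction with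
  | mem _ hs => obtain ⟨s, rfl⟩ := hs; exact h s
  | zero => simp
  | add _ _ _ _ h₁ h₂ => simp [h₁, h₂]
  | smul _ _ _ h => simp [h]
  | lie _ _ _ _ h₁ h₂ => simp [h₁, h₂]

noncomputable def liftDualExt (δ : X → FreeLieAlgebra ℤ X) :
    FreeLieAlgebra ℤ X →ₗ⁅ℤ⁆ DualExt (FreeLieAlgebra ℤ X) :=
  lift ℤ fun s => ((of ℤ s, δ s) : FreeLieAlgebra ℤ X × FreeLieAlgebra ℤ X)

theorem fst_liftDualExt (δ : X → FreeLieAlgebra ℤ X) (y : FreeLieAlgebra ℤ X) :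
    (liftDualExt δ y).1 = y := by
  have h : DualExt.fst.comp (liftDualExt δ) = LieHom.id :=
    hom_ext fun s => congrArg DualExt.fst (lift_of_apply (R := ℤ) (L := DualExt _) _ s)
  exact LieHom.congr_fun h y

noncomputable def derivation (δ : X → FreeLieAlgebra ℤ X) :
    LieDerivation ℤ (FreeLieAlgebra ℤ X) (FreeLieAlgebra ℤ X) where
  toFun y := (liftDualExt δ y).2
  map_add' y z := by rw [map_add]; rfl
  map_smul' c y := by rw [map_smul]; rfl
  leibniz' y z := by
    have h := congrArg Prod.snd ((liftDualExt δ).map_lie y z)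
    change _ = ⁅(liftDualExt δ y).1, (liftDualExt δ z).2⁆ +
      ⁅(liftDualExt δ y).2, (liftDualExt δ z).1⁆ at h
    rw [fst_liftDualExt, fst_liftDualExt] at h
    change (liftDualExt δ ⁅y, z⁆).2 = ⁅y, (liftDualExt δ z).2⁆ - ⁅z, (liftDualExt δ y).2⁆
    rw [h, ← lie_skew z, sub_neg_eq_add]

theorem derivation_of (δ : X → FreeLieAlgebra ℤ X) (s : X) : derivation δ (of ℤ s) = δ s :=
  congrArg Prod.snd (lift_of_apply (R := ℤ) (L := DualExt _) _ s)

end FreeLieAlgebra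

inductive LieWord (X : Type u) : Type u
  | letter : X → LieWord X
  | lie : LieWord X → LieWord X → LieWord X

namespace LieWord

variable {X : Type u}

noncomputable def eval : LieWord X → FreeLieAlgebra ℤ X
  | letter s => of ℤ s
  | lie u v => ⁅u.eval, v.eval⁆

def weight {A : Type*} [AddCommMonoid A] (w : X → A) : LieWord X → A
  | letter s => w s
  | lie u v => u.weight w + v.weight w

def length (M : LieWord X) : ℕ := M.weight fun _ => 1

section Weight

variable {A B : Type*} [AddCommMonoid A] [AddCommMonoid B]

@[simp] theorem weight_lie (w : X → A) (u v : LieWord X) :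
    (lie u v).weight w = u.weight w + v.weight w := rfl

theorem weight_comp (f : A →+ B) (w : X → A) (M : LieWord X) :
    M.weight (f ∘ w) = f (M.weight w) := by
  induction M with
  | letter s => rfl
  | lie u v hu hv => simp [hu, hv]

theorem weight_add (w₁ w₂ : X → A) (M : LieWord X) :
    M.weight (w₁ + w₂) = M.weight w₁ + M.weight w₂ := by
  induction M with
  | letter s => rfl
  | lie u v hu hv => simp only [weight_lie, hu, hv]; abel

@[simp] theorem weight_one (M : LieWord X) : M.weight (fun _ => 1) = M.length := rfl

@[simp] theorem length_letter (s : X) : (letter s).length = 1 := rfl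

@[simp] theorem length_lie (u v : LieWord X) : (lie u v).length = u.length + v.length := rfl

theorem length_pos (M : LieWord X) : 0 < M.length := by
  induction M with
  | letter s => simp
  | lie u v hu hv => simp; omega

theorem length_eq_degree (M : LieWord X) :
    M.length = (M.weight fun s => Finsupp.single s 1).degree := by
  rw [← weight_comp]
  simp [Function.comp_def, Finsupp.degree_single]

end Weight

noncomputable abbrev span (P : Set (LieWord X)) : Submodule ℤ (FreeLieAlgebra ℤ X) :=
  Submodule.span ℤ (eval '' P)

theorem eval_mem_span {P : Set (LieWord X)} {M : LieWord X} (hM : M ∈ P) : M.eval ∈ span P :=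
  Submodule.subset_span ⟨M, hM, rfl⟩

theorem span_mono {P Q : Set (LieWord X)} (h : P ⊆ Q) : span P ≤ span Q :=
  Submodule.span_mono (Set.image_mono h)

theorem span_eq_bot {P : Set (LieWord X)} (h : ∀ M, M ∉ P) : span P = ⊥ := by
  simp [Set.eq_empty_of_forall_notMem h]

theorem map_mem_span {N : Type*} [AddCommGroup N] {P : Set (LieWord X)} {S : Submodule ℤ N}
    (f : FreeLieAlgebra ℤ X →ₗ[ℤ] N) (hf : ∀ M ∈ P, f M.eval ∈ S) {y : FreeLieAlgebra ℤ X}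
    (hy : y ∈ span P) : f y ∈ S :=
  (Submodule.span_le (p := S.comap f)).2 (by rintro _ ⟨M, hM, rfl⟩; exact hf M hM) hy

theorem lie_mem_span {P Q R : Set (LieWord X)} (h : ∀ u ∈ P, ∀ v ∈ Q, lie u v ∈ R)
    {y z : FreeLieAlgebra ℤ X} (hy : y ∈ span P) (hz : z ∈ span Q) : ⁅y, z⁆ ∈ span R := by
  induction hy using Submodule.span_induction with
  | mem _ hy =>
    obtain ⟨u, hu, rfl⟩ := hy
    induction hz using Submodule.span_induction with
    | mem _ hz => obtain ⟨v, hv, rfl⟩ := hz; exact eval_mem_span (h u hu v hv)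
    | zero => simp
    | add _ _ _ _ h₁ h₂ => rw [lie_add]; exact add_mem h₁ h₂
    | smul c _ _ h => rw [lie_smul]; exact Submodule.smul_mem _ c h
  | zero => simp
  | add _ _ _ _ h₁ h₂ => rw [add_lie]; exact add_mem h₁ h₂
  | smul c _ _ h => rw [smul_lie]; exact Submodule.smul_mem _ c h

theorem span_univ : span (Set.univ : Set (LieWord X)) = ⊤ := by
  refine eq_top_iff.2 fun y _ => ?_
  let A : LieSubalgebra ℤ (FreeLieAlgebra ℤ X) :=
    { span Set.univ with lie_mem' := lie_mem_span fun _ _ _ _ => Set.mem_univ _ }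
  have hA : LieSubalgebra.lieSpan ℤ _ (Set.range (of ℤ)) ≤ A :=
    LieSubalgebra.lieSpan_le.2 (by rintro _ ⟨s, rfl⟩; exact eval_mem_span (M := letter s) trivial)
  exact hA (by rw [lieSpan_range_of]; trivial)

theorem derivation_eval_mem {A : Type*} [AddCommMonoid A] (w : X → A) (s t : A)
    (D : LieDerivation ℤ (FreeLieAlgebra ℤ X) (FreeLieAlgebra ℤ X))
    (hD : ∀ a, D (of ℤ a) ∈ span {N | N.weight w + t = w a + s}) (M : LieWord X) :
    D M.eval ∈ span {N | N.weight w + t = M.weight w + s} := by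
  induction M with
  | letter a => exact hD a
  | lie u v hu hv =>
    rw [eval, LieDerivation.apply_lie_eq_add]
    refine add_mem (lie_mem_span ?_ (eval_mem_span rfl) hv)
      (lie_mem_span ?_ hu (eval_mem_span rfl))
    · rintro _ rfl N (hN : _ = _)
      simp only [Set.mem_ofPred_eq, weight_lie, add_assoc, hN]
    · rintro N (hN : _ = _) _ rfl
      simp only [Set.mem_ofPred_eq, weight_lie, add_right_comm _ _ t, hN, add_right_comm _ s]

theorem derivation_mem_span_length (D : LieDerivation ℤ (FreeLieAlgebra ℤ X) (FreeLieAlgebra ℤ X))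
    (hD : ∀ a, D (of ℤ a) ∈ span {N | N.length = 1}) {k : ℕ} {y : FreeLieAlgebra ℤ X}
    (hy : y ∈ span {N | N.length = k}) : D y ∈ span {N | N.length = k} := by
  refine map_mem_span D.toLinearMap (fun M (hM : _ = _) => ?_) hy
  have h := derivation_eval_mem (fun _ => 1) 0 0 D
    (fun a => by simpa only [add_zero, weight_one] using hD a) M
  simp only [add_zero, weight_one] at h
  exact hM ▸ h

section Grading

open scoped TensorProduct

variable {A : Type*} [AddCommMonoid A]

/-- `y ↦ ∑ₖ Tᵏ ⊗ yₖ`, where `yₖ` is the part of `y` of weight `k`. -/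
noncomputable def gradingHom (w : X → A) :
    FreeLieAlgebra ℤ X →ₗ⁅ℤ⁆ AddMonoidAlgebra ℤ A ⊗[ℤ] FreeLieAlgebra ℤ X :=
  lift ℤ fun s => AddMonoidAlgebra.single (w s) 1 ⊗ₜ of ℤ s

noncomputable def gradedPart (w : X → A) (k : A) :
    FreeLieAlgebra ℤ X →ₗ[ℤ] FreeLieAlgebra ℤ X :=
  (TensorProduct.lid ℤ _).toLinearMap ∘ₗ
    ((Finsupp.lapply k ∘ₗ (AddMonoidAlgebra.coeffLinearEquiv ℤ).toLinearMap).rTensor _) ∘ₗ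
    (gradingHom w).toLinearMap

theorem gradingHom_eval (w : X → A) (M : LieWord X) :
    gradingHom w M.eval = AddMonoidAlgebra.single (M.weight w) 1 ⊗ₜ M.eval := by
  induction M with
  | letter s => exact lift_of_apply _ s
  | lie u v hu hv =>
    rw [eval, LieHom.map_lie, hu, hv, LieAlgebra.ExtendScalars.bracket_tmul,
      AddMonoidAlgebra.single_mul_single, one_mul, weight_lie]

open Classical in
theorem gradedPart_eval (w : X → A) (k : A) (M : LieWord X) :
    gradedPart w k M.eval = if M.weight w = k then M.eval else 0 := by
  change TensorProduct.lid ℤ _ (LinearMap.rTensor _ _ (gradingHom w M.eval)) = _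
  rw [gradingHom_eval]
  simp [AddMonoidAlgebra.coeff_single, Finsupp.single_apply]

theorem gradedPart_mem_span (w : X → A) (k : A) {P : Set (LieWord X)} {y : FreeLieAlgebra ℤ X}
    (hy : y ∈ span P) : gradedPart w k y ∈ span (P ∩ {M | M.weight w = k}) := by
  classical
  refine map_mem_span _ (fun M hM => ?_) hy
  rw [gradedPart_eval]
  split_ifs with h
  · exact eval_mem_span ⟨hM, h⟩
  · exact zero_mem _

open Classical in
theorem gradedPart_of_mem_span {w : X → A} {j : A} (k : A) {y : FreeLieAlgebra ℤ X}
    (hy : y ∈ span {N | N.weight w = j}) : gradedPart w k y = if j = k then y else 0 := by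
  induction hy using Submodule.span_induction with
  | mem _ h => obtain ⟨M, rfl, rfl⟩ := h; exact gradedPart_eval w k M
  | zero => simp
  | add _ _ _ _ h₁ h₂ => rw [map_add, h₁, h₂]; split_ifs <;> simp
  | smul c _ _ h => rw [map_smul, h]; split_ifs <;> simp

theorem gradedPart_comp {w : X → A} (f : FreeLieAlgebra ℤ X →ₗ[ℤ] FreeLieAlgebra ℤ X)
    (hf : ∀ M : LieWord X, f M.eval ∈ span {N | N.weight w = M.weight w}) (k : A) :
    gradedPart w k ∘ₗ f = f ∘ₗ gradedPart w k := by
  classical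
  refine LinearMap.ext_on span_univ ?_
  rintro _ ⟨M, -, rfl⟩
  simp only [LinearMap.comp_apply, gradedPart_of_mem_span k (hf M), gradedPart_eval]
  split_ifs <;> simp

theorem exists_sum_gradedPart (w : X → A) (y : FreeLieAlgebra ℤ X) :
    ∃ F : Finset A, ∀ F' : Finset A, F ⊆ F' → ∑ k ∈ F', gradedPart w k y = y := by
  classical
  induction span_univ.ge (Submodule.mem_top : y ∈ ⊤) using Submodule.span_induction with
  | mem _ h =>
    obtain ⟨M, -, rfl⟩ := h
    refine ⟨{M.weight w}, fun F' hF' => ?_⟩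
    simp only [gradedPart_eval, Finset.sum_ite_eq, if_pos (hF' (Finset.mem_singleton_self _))]
  | zero => exact ⟨∅, fun F' _ => by simp⟩
  | add y z _ _ hy hz =>
    obtain ⟨F₁, h₁⟩ := hy
    obtain ⟨F₂, h₂⟩ := hz
    refine ⟨F₁ ∪ F₂, fun F' hF' => ?_⟩
    rw [Finset.union_subset_iff] at hF'
    simp only [map_add, Finset.sum_add_distrib, h₁ F' hF'.1, h₂ F' hF'.2]
  | smul c y _ hy =>
    obtain ⟨F, h⟩ := hy
    exact ⟨F, fun F' hF' => by simp only [map_smul, ← Finset.smul_sum, h F' hF']⟩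

theorem eq_zero_of_forall_gradedPart_eq_zero (w : X → A) {y : FreeLieAlgebra ℤ X}
    (h : ∀ k, gradedPart w k y = 0) : y = 0 := by
  obtain ⟨F, hF⟩ := exists_sum_gradedPart w y
  rw [← hF F subset_rfl]
  simp [h]

end Grading

end LieWord

namespace Lazard

open LieWord

-- `ℤ` as the one-dimensional abelian Lie algebra
attribute [local instance] LieRing.ofAssociativeRing

variable {X : Type u} (x : X)

/-- `(n, b)` stands for `(ad x)ⁿ b`. -/
abbrev Gen : Type u := ℕ × {b : X // b ≠ x}

noncomputable def shift :
    LieDerivation ℤ (FreeLieAlgebra ℤ (Gen x)) (FreeLieAlgebra ℤ (Gen x)) :=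
  derivation fun g => of ℤ (g.1 + 1, g.2)

noncomputable def lower :
    LieDerivation ℤ (FreeLieAlgebra ℤ (Gen x)) (FreeLieAlgebra ℤ (Gen x)) :=
  derivation fun g => (g.1 : ℤ) • of ℤ (g.1 - 1, g.2)

theorem shift_mem_span_length {k : ℕ} {y : FreeLieAlgebra ℤ (Gen x)}
    (hy : y ∈ span {N | N.length = k}) : shift x y ∈ span {N | N.length = k} :=
  derivation_mem_span_length (shift x) (fun g => by
    rw [shift, derivation_of]
    exact eval_mem_span (M := letter ((g.1 + 1, g.2) : Gen x)) rfl) hy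

noncomputable def shiftHom :
    ℤ →ₗ⁅ℤ⁆ LieDerivation ℤ (FreeLieAlgebra ℤ (Gen x)) (FreeLieAlgebra ℤ (Gen x)) where
  __ := LinearMap.toSpanSingleton ℤ _ (shift x)
  map_lie' {m n} := by simp [Ring.lie_def, mul_comm]

theorem shiftHom_apply (n : ℤ) (u : FreeLieAlgebra ℤ (Gen x)) :
    shiftHom x n u = n • shift x u := rfl

abbrev Ext := FreeLieAlgebra ℤ (Gen x) ⋊⁅shiftHom x⁆ ℤ

noncomputable def toFree : FreeLieAlgebra ℤ (Gen x) →ₗ⁅ℤ⁆ FreeLieAlgebra ℤ X :=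
  lift ℤ fun g => (LieAlgebra.ad ℤ _ (of ℤ x) ^ g.1) (of ℤ g.2.1)

theorem toFree_of (g : Gen x) :
    toFree x (of ℤ g) = (LieAlgebra.ad ℤ _ (of ℤ x) ^ g.1) (of ℤ g.2.1) :=
  lift_of_apply _ g

theorem toFree_shift (u : FreeLieAlgebra ℤ (Gen x)) :
    toFree x (shift x u) = ⁅of ℤ x, toFree x u⁆ := by
  have := map_derivation_eq (toFree x) (shift x) (LieDerivation.ad ℤ _ (of ℤ x)) (fun g => by
    rw [shift, derivation_of, toFree_of, toFree_of, pow_succ', Module.End.mul_apply]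
    simp) u
  simpa using this

noncomputable def ofExt : Ext x →ₗ⁅ℤ⁆ FreeLieAlgebra ℤ X where
  toFun p := p.right • of ℤ x + toFree x p.left
  map_add' p q := by simp only [LieAlgebra.SemiDirectSum.add_eq_mk, add_smul, map_add]; abel
  map_smul' c p := by simp [smul_add, mul_smul]
  map_lie' {p q} := by
    simp only [LieAlgebra.SemiDirectSum.lie_eq_mk, Ring.lie_def, mul_comm, sub_self, zero_smul,
      zero_add, map_add, map_sub, LieHom.map_lie, shiftHom_apply, map_smul, toFree_shift,
      lie_add, add_lie, smul_lie, lie_smul, lie_self, smul_zero]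
    rw [← lie_skew (toFree x p.left) (of ℤ x)]
    module

variable [DecidableEq X]

noncomputable def toExt : FreeLieAlgebra ℤ X →ₗ⁅ℤ⁆ Ext x :=
  lift ℤ fun s => if h : s = x then ⟨0, 1⟩ else ⟨of ℤ (0, ⟨s, h⟩), 0⟩

theorem toExt_of_self : toExt x (of ℤ x) = ⟨0, 1⟩ :=
  (lift_of_apply (R := ℤ) (L := Ext x) _ x).trans (dif_pos rfl)

theorem toExt_of_of_ne {s : X} (h : s ≠ x) : toExt x (of ℤ s) = ⟨of ℤ (0, ⟨s, h⟩), 0⟩ :=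
  (lift_of_apply (R := ℤ) (L := Ext x) _ s).trans (dif_neg h)

theorem ofExt_toExt (y : FreeLieAlgebra ℤ X) : ofExt x (toExt x y) = y := by
  have h : (ofExt x).comp (toExt x) = LieHom.id := by
    refine hom_ext fun s => ?_
    change ofExt x (toExt x (of ℤ s)) = of ℤ s
    by_cases hs : s = x
    · subst hs
      rw [toExt_of_self]
      change (1 : ℤ) • of ℤ s + toFree s 0 = of ℤ s
      simp
    · rw [toExt_of_of_ne x hs]
      change (0 : ℤ) • of ℤ x + toFree x (of ℤ (0, ⟨s, hs⟩)) = of ℤ s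
      simp [toFree_of]
  exact LieHom.congr_fun h y

theorem toExt_injective : Function.Injective (toExt x) :=
  Function.LeftInverse.injective (ofExt_toExt x)

theorem left_toExt_lie_of_self (y : FreeLieAlgebra ℤ X) :
    (toExt x ⁅y, of ℤ x⁆).left = -shift x (toExt x y).left := by
  rw [LieHom.map_lie, toExt_of_self, LieAlgebra.SemiDirectSum.lie_eq_mk]
  simp only [lie_zero, map_zero, shiftHom_apply, one_smul, zero_add, zero_sub]

theorem eq_smul_of_left_toExt_eq_zero {y : FreeLieAlgebra ℤ X} (h : (toExt x y).left = 0) :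
    y = (toExt x y).right • of ℤ x := by
  refine toExt_injective x ?_
  rw [map_smul, toExt_of_self]
  ext
  · simpa using h
  · simp

def awayWeight (s : X) : ℕ := if s = x then 0 else 1

theorem weight_awayWeight_add (M : LieWord X) :
    M.weight (awayWeight x) + (M.weight fun s => Finsupp.single s 1) x = M.length := by
  rw [← Finsupp.applyAddHom_apply, ← weight_comp, ← weight_add]
  congr 1
  ext s
  by_cases h : s = x <;> simp [awayWeight, h, Ne.symm]

theorem toExt_eval (M : LieWord X) :
    (toExt x M.eval).left ∈ span {N | N.length = M.weight (awayWeight x)} ∧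
      ((toExt x M.eval).right = 0 ∨ M.weight (awayWeight x) = 0) := by
  induction M with
  | letter s =>
    by_cases hs : s = x
    · subst hs
      rw [eval, toExt_of_self]
      exact ⟨zero_mem _, Or.inr (if_pos rfl : awayWeight s s = 0)⟩
    · rw [eval, toExt_of_of_ne x hs]
      exact ⟨eval_mem_span (M := letter ((0, ⟨s, hs⟩) : Gen x))
        (if_neg hs : awayWeight x s = 1).symm, Or.inl rfl⟩
  | lie u v hu hv =>
    obtain ⟨hul, hur⟩ := hu
    obtain ⟨hvl, hvr⟩ := hv
    rw [eval, LieHom.map_lie, LieAlgebra.SemiDirectSum.lie_eq_mk]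
    refine ⟨?_, Or.inl (by simp only [Ring.lie_def, mul_comm, sub_self])⟩
    simp only [shiftHom_apply, weight_lie]
    refine sub_mem (add_mem (lie_mem_span ?_ hul hvl) ?_) ?_
    · rintro _ (h₁ : _ = _) _ (h₂ : _ = _)
      simp [h₁, h₂]
    · rcases hur with h | h
      · rw [h, zero_smul]
        exact zero_mem _
      · rw [h, zero_add]
        exact Submodule.smul_mem _ _ (shift_mem_span_length x hvl)
    · rcases hvr with h | h
      · rw [h, zero_smul]
        exact zero_mem _
      · rw [h, add_zero]
        exact Submodule.smul_mem _ _ (shift_mem_span_length x hul)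

theorem left_toExt_mem_span {j : ℕ} {z : FreeLieAlgebra ℤ X}
    (hz : z ∈ span {M | M.weight (awayWeight x) = j}) :
    (toExt x z).left ∈ span {N | N.length = j} :=
  map_mem_span ((LieAlgebra.SemiDirectSum.projl _) ∘ₗ (toExt x : _ →ₗ[ℤ] Ext x))
    (fun M (hM : _ = _) => hM ▸ (toExt_eval x M).1) hz

theorem eq_zero_of_zsmul_eq_zero {j : ℕ} {n : ℤ} (hn : n ≠ 0)
    (ih : ∀ u ∈ span {N : LieWord (Gen x) | N.length = j}, n • u = 0 → u = 0)
    {z : FreeLieAlgebra ℤ X} (hz : z ∈ span {M | M.weight (awayWeight x) = j})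
    (hnz : n • z = 0) : z = 0 := by
  have h : n • toExt x z = 0 := by rw [← map_smul, hnz, map_zero]
  refine toExt_injective x (LieAlgebra.SemiDirectSum.ext ?_ ?_) <;> rw [map_zero]
  · exact ih _ (left_toExt_mem_span x hz) (congrArg LieAlgebra.SemiDirectSum.left h)
  · simpa [hn] using congrArg LieAlgebra.SemiDirectSum.right h

end Lazard

namespace LieWord

theorem eq_zero_of_zsmul_eq_zero_of_mem_span (k : ℕ) :
    ∀ {X : Type u} {n : ℤ}, n ≠ 0 →
      ∀ z ∈ span {M : LieWord X | M.length = k}, n • z = 0 → z = 0 := by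
  induction k using Nat.strong_induction_on with
  | _ k ih =>
  intro X n hn z hz hnz
  classical
  refine eq_zero_of_forall_gradedPart_eq_zero (fun s => Finsupp.single s 1) fun α => ?_
  have hzα := gradedPart_mem_span (fun s => Finsupp.single s 1) α hz
  have hnzα : n • gradedPart (fun s => Finsupp.single s 1) α z = 0 := by
    rw [← map_smul, hnz, map_zero]
  by_cases hkα : k = 0 ∨ α = 0
  · have hempty : ∀ M, M ∉ {M : LieWord X | M.length = k} ∩
        {M | M.weight (fun s => Finsupp.single s 1) = α} := by
      rintro M ⟨hMk, hMα⟩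
      refine (length_pos M).ne' ?_
      rcases hkα with rfl | rfl
      · exact hMk
      · rw [length_eq_degree, hMα, map_zero]
    rw [span_eq_bot hempty] at hzα
    exact (Submodule.mem_bot ℤ).1 hzα
  push Not at hkα
  obtain ⟨x, hx⟩ := Finsupp.ne_iff.1 hkα.2
  refine Lazard.eq_zero_of_zsmul_eq_zero x hn
    (ih (k - α x) (by simp at hx; omega) hn) (span_mono ?_ hzα) hnzα
  rintro M ⟨hMk, hMα⟩
  have := Lazard.weight_awayWeight_add x M
  rw [hMα, hMk] at this
  change _ = _
  omega

end LieWord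

namespace FreeLieAlgebra

open LieWord

variable {X : Type u}

theorem eq_zero_of_zsmul_eq_zero {n : ℤ} (hn : n ≠ 0) {z : FreeLieAlgebra ℤ X}
    (hnz : n • z = 0) : z = 0 := by
  refine eq_zero_of_forall_gradedPart_eq_zero (fun _ => 1) fun k => ?_
  refine eq_zero_of_zsmul_eq_zero_of_mem_span k hn _
    (span_mono (fun M h => h.2) (gradedPart_mem_span _ k (span_univ.ge trivial))) ?_
  rw [← map_smul, hnz, map_zero]

instance : IsAddTorsionFree (FreeLieAlgebra ℤ X) where
  nsmul_right_injective n hn a b hab := sub_eq_zero.1 <|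
    eq_zero_of_zsmul_eq_zero (n := n) (by exact_mod_cast hn) (by
      rw [smul_sub, natCast_zsmul, natCast_zsmul]
      exact sub_eq_zero.2 hab)

end FreeLieAlgebra

namespace Lazard

open LieWord

variable {X : Type u} (x : X)

theorem lower_mem_span_length {k : ℕ} {y : FreeLieAlgebra ℤ (Gen x)}
    (hy : y ∈ span {N | N.length = k}) : lower x y ∈ span {N | N.length = k} :=
  derivation_mem_span_length (lower x) (fun g => by
    rw [lower, derivation_of]
    exact Submodule.smul_mem _ _ (eval_mem_span (M := letter ((g.1 - 1, g.2) : Gen x)) rfl)) hy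

theorem lower_pow_eval_mem (M : LieWord (Gen x)) (j : ℕ) :
    ((lower x : Module.End ℤ _) ^ j) M.eval ∈
      span {N | N.weight Prod.fst + j = M.weight Prod.fst} := by
  induction j with
  | zero => exact eval_mem_span (add_zero _)
  | succ j ih =>
    rw [pow_succ', Module.End.mul_apply]
    refine map_mem_span (lower x).toLinearMap (fun N (hN : _ = _) =>
      span_mono ?_ (derivation_eval_mem Prod.fst 0 1 (lower x) (fun g => ?_) N)) ih
    · rintro N' (h : _ = _)
      change _ = _
      omega
    · rw [lower, derivation_of]
      rcases g with ⟨_ | n, b⟩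
      · simp
      · exact Submodule.smul_mem _ _ (eval_mem_span (M := letter ((n, b) : Gen x)) rfl)

theorem exists_lower_pow_eq_zero (y : FreeLieAlgebra ℤ (Gen x)) :
    ∃ N, ((lower x : Module.End ℤ _) ^ N) y = 0 := by
  have : y ∈ (lower x : Module.End ℤ _).maxGenEigenspace 0 := by
    refine Submodule.span_le.2 ?_ (span_univ.ge trivial)
    rintro _ ⟨M, -, rfl⟩
    refine (Module.End.mem_maxGenEigenspace _ _ _).2 ⟨M.weight Prod.fst + 1, ?_⟩
    have := lower_pow_eval_mem x M (M.weight Prod.fst + 1)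
    rw [span_eq_bot (P := {N | N.weight Prod.fst + (M.weight Prod.fst + 1) = M.weight Prod.fst})
      fun N (hN : _ = _) => by omega] at this
    simpa using this
  simpa [Module.End.mem_maxGenEigenspace] using this

theorem lower_shift_eval (M : LieWord (Gen x)) :
    lower x (shift x M.eval) - shift x (lower x M.eval) = (M.length : ℤ) • M.eval := by
  rw [← LieDerivation.lie_apply]
  induction M with
  | letter g =>
    rcases g with ⟨_ | n, b⟩
    · simp [LieDerivation.lie_apply, eval, lower, shift, derivation_of]
    · simp only [LieDerivation.lie_apply, eval, lower, shift, derivation_of, map_smul]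
      simp
      module
  | lie u v hu hv =>
    rw [eval, LieDerivation.apply_lie_eq_add, hu, hv, length_lie]
    simp only [lie_smul, smul_lie, Nat.cast_add, add_smul]
    abel

theorem lower_shift_of_mem_span {r : ℕ} {v : FreeLieAlgebra ℤ (Gen x)}
    (hv : v ∈ span {N | N.length = r}) :
    lower x (shift x v) - shift x (lower x v) = (r : ℤ) • v := by
  have h := map_mem_span ((lower x).toLinearMap ∘ₗ (shift x).toLinearMap -
    (shift x).toLinearMap ∘ₗ (lower x).toLinearMap - (r : ℤ) • LinearMap.id) (S := ⊥)
    (fun M (hM : _ = _) => by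
      simp only [Submodule.mem_bot, LinearMap.sub_apply, LinearMap.comp_apply,
        LieDerivation.coeFn_coe, lower_shift_eval, hM, LinearMap.smul_apply, LinearMap.id_apply,
        sub_self]) hv
  simpa [Submodule.mem_bot, sub_eq_zero] using h

theorem shift_injective : Function.Injective (shift x) := by
  refine (injective_iff_map_eq_zero (shift x)).2 fun u hu => ?_
  refine eq_zero_of_forall_gradedPart_eq_zero (fun _ => 1) fun r => ?_
  have hv : gradedPart (fun _ => 1) r u ∈ span {N | N.length = r} :=
    span_mono (fun N h => h.2) (gradedPart_mem_span _ r (span_univ.ge trivial))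
  have hdv : shift x (gradedPart (fun _ => 1) r u) = 0 := by
    have := LinearMap.congr_fun (gradedPart_comp (shift x).toLinearMap
      (fun M => shift_mem_span_length x (eval_mem_span rfl)) r) u
    simpa [hu] using this.symm
  rcases eq_or_ne r 0 with rfl | hr
  · rw [span_eq_bot (P := {N | N.length = 0}) fun N hN => (length_pos N).ne' hN] at hv
    exact (Submodule.mem_bot ℤ).1 hv
  · exact Module.End.eq_zero_of_commutator_eq_smul (d := shift x) (e := lower x)
      (Int.natCast_ne_zero.2 hr) (fun v hv => lower_mem_span_length x hv)
      (fun v hv => lower_shift_of_mem_span x hv) hv hdv (exists_lower_pow_eq_zero x _)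

attribute [local instance] LieRing.ofAssociativeRing in
theorem exists_smul_eq_of_lie_eq_zero [DecidableEq X] {y : FreeLieAlgebra ℤ X}
    (hy : ⁅y, of ℤ x⁆ = 0) : ∃ c : ℤ, c • of ℤ x = y := by
  have hshift : shift x (toExt x y).left = 0 := by
    simpa [hy] using (left_toExt_lie_of_self x y).symm
  exact ⟨_, (eq_smul_of_left_toExt_eq_zero x (shift_injective x hshift)).symm⟩

end Lazard

theorem centralizer_of_generator_in_free_lie_algebra_general (S : Type*) (a : S) :
    {x : FreeLieAlgebra ℤ S | ⁅x, FreeLieAlgebra.of ℤ a⁆ = 0} =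
      ↑(Submodule.span ℤ {FreeLieAlgebra.of ℤ a}) := by
  classical
  ext y
  rw [SetLike.mem_coe, Submodule.mem_span_singleton]
  refine ⟨Lazard.exists_smul_eq_of_lie_eq_zero a, ?_⟩
  rintro ⟨c, rfl⟩
  exact (smul_lie c _ _).trans (by rw [lie_self, smul_zero])

/-- In the free Lie algebra over ℤ on a set `S` with at least two elements, the
centralizer of a generator `a ∈ S` is exactly the ℤ-linear span of `a`. -/
theorem centralizer_of_generator_in_free_lie_algebra (S : Type*) (a : S)
    (hS : ∃ b : S, b ≠ a) :
    {x : FreeLieAlgebra ℤ S | ⁅x, FreeLieAlgebra.of ℤ a⁆ = 0} =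
      ↑(Submodule.span ℤ {FreeLieAlgebra.of ℤ a}) :=
  centralizer_of_generator_in_free_lie_algebra_general S a
end

section
/- Let A be a free abelian group with basis S containing an element a, with |S| ≥ 2. If x ∈ A^{⊗n} (a homogeneous element of the tensor algebra T[A]) satisfies a ⊗ x = x ⊗ a, then x is an integer multiple of a^{⊗n}. -/
/-!
A basis identifies `T[M]` with the monoid algebra `ℤ[S*]` of the free monoid on `S`, sending
`a = b s₀` to the one-letter word `s₀` and a homogeneous element of degree `n` to a combination
of words of length `n`. If `x` commutes with `a`, it commutes with `aⁿ`, so every word `v` in its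
support satisfies `v s₀ⁿ = s₀ⁿ w` for some word `w`; as `v` has length `n`, comparing the first `n`
letters gives `v = s₀ⁿ`.
-/

open MonoidAlgebra Pointwise

namespace FreeMonoid

variable {α : Type*}

theorem toList_of_pow (a : α) (n : ℕ) : (of a ^ n).toList = List.replicate n a := by
  induction n with
  | zero => rfl
  | succ n ih => rw [pow_succ, toList_mul, ih, toList_of, List.replicate_succ']

theorem eq_of_pow_of_mul_eq {a : α} {v w : FreeMonoid α}
    (h : v * of a ^ v.length = of a ^ v.length * w) : v = of a ^ v.length := by
  apply toList.injective
  have h' := congrArg toList h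
  rw [toList_mul, toList_mul, toList_of_pow] at h'
  rw [toList_of_pow]
  exact (List.append_inj h' (List.length_replicate ..).symm).1

end FreeMonoid

namespace MonoidAlgebra

variable {k G : Type*} [CommSemiring k]

theorem supported_mul_supported_le [Monoid G] (s t : Set G) :
    supported k k s * supported k k t ≤ supported k k (s * t) := by
  classical
  refine Submodule.mul_le.2 fun x hx y hy => ?_
  rw [mem_supported] at hx hy ⊢
  exact (Finset.coe_subset.2 (support_coeff_mul_subset x y)).trans
    ((Finset.coe_mul _ _).trans_subset (Set.mul_subset_mul hx hy))

theorem supported_length_eq_one_pow_le {α : Type*} (n : ℕ) :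
    supported k k {w : FreeMonoid α | w.length = 1} ^ n ≤
      supported k k {w : FreeMonoid α | w.length = n} := by
  induction n with
  | zero =>
    rw [pow_zero, Submodule.one_le, mem_supported]
    exact (Finset.coe_subset.2 support_coeff_one_subset).trans (by simp)
  | succ n ih =>
    rw [pow_succ]
    refine (mul_le_mul_left ih _).trans <|
      (supported_mul_supported_le _ _).trans (supported_mono ?_)
    rintro _ ⟨v, hv, w, hw, rfl⟩
    simp_all [FreeMonoid.length_mul]

theorem exists_mem_support_mul_eq_of_commute_single [Mul G] [IsCancelMul G] {g : G} {y : k[G]}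
    (hy : Commute (single g 1) y) {v : G} (hv : v ∈ y.coeff.support) :
    ∃ w ∈ y.coeff.support, v * g = g * w := by
  have hsupp := congrArg (fun z : k[G] => z.coeff.support) hy.eq
  simp only [support_coeff_single_mul _ (1 : k) (fun _ => by rw [one_mul]) g,
    support_coeff_mul_single _ (1 : k) (fun _ => by rw [mul_one]) g] at hsupp
  have hvg : v * g ∈ y.coeff.support.map (mulRightEmbedding g) := Finset.mem_map_of_mem _ hv
  obtain ⟨w, hw, hgw⟩ := Finset.mem_map.1 (hsupp ▸ hvg)
  exact ⟨w, hw, hgw.symm⟩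

end MonoidAlgebra

namespace TensorAlgebra

variable {κ R M : Type*} [CommSemiring R] [AddCommMonoid M] [Module R M]

noncomputable def equivMonoidAlgebraFreeMonoid (b : Module.Basis κ R M) :
    TensorAlgebra R M ≃ₐ[R] R[FreeMonoid κ] :=
  (equivFreeAlgebra b).trans FreeAlgebra.equivMonoidAlgebraFreeMonoid

@[simp]
theorem equivMonoidAlgebraFreeMonoid_ι_basis (b : Module.Basis κ R M) (i : κ) :
    equivMonoidAlgebraFreeMonoid b (ι R (b i)) = single (FreeMonoid.of i) 1 := by
  simp [equivMonoidAlgebraFreeMonoid, FreeAlgebra.equivMonoidAlgebraFreeMonoid, of_apply]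

theorem map_range_ι_pow_le_supported (b : Module.Basis κ R M) (n : ℕ) :
    (LinearMap.range (ι R : M →ₗ[R] TensorAlgebra R M) ^ n).map
        (equivMonoidAlgebraFreeMonoid b).toLinearMap ≤
      supported R R {w : FreeMonoid κ | w.length = n} := by
  have h := Submodule.map_pow (LinearMap.range (ι R : M →ₗ[R] TensorAlgebra R M))
    (equivMonoidAlgebraFreeMonoid b).toAlgHom n
  refine (h.trans_le (pow_le_pow_left' ?_ n)).trans (supported_length_eq_one_pow_le n)
  rw [LinearMap.range_eq_map, ← b.span_eq, Submodule.map_span, Submodule.map_span, Submodule.span_le]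
  rintro _ ⟨_, ⟨_, ⟨i, rfl⟩, rfl⟩, rfl⟩
  simp only [SetLike.mem_coe, AlgEquiv.toAlgHom_toLinearMap, AlgEquiv.toLinearMap_apply,
    equivMonoidAlgebraFreeMonoid_ι_basis, mem_supported, coeff_single]
  exact (Finset.coe_subset.2 Finsupp.support_single_subset).trans (by simp [FreeMonoid.length_of])

end TensorAlgebra

theorem homogeneous_commutes_with_basis_element_general (S : Type*) (M : Type*)
    [AddCommGroup M] [Module ℤ M] (b : Module.Basis S ℤ M) (s₀ : S)
    (n : ℕ) (x : TensorAlgebra ℤ M)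
    (hx : x ∈ (LinearMap.range (TensorAlgebra.ι ℤ : M →ₗ[ℤ] TensorAlgebra ℤ M)) ^ n)
    (hcomm : TensorAlgebra.ι ℤ (b s₀) * x = x * TensorAlgebra.ι ℤ (b s₀)) :
    ∃ k : ℤ, x = k • (TensorAlgebra.ι ℤ (b s₀)) ^ n := by
  set φ := TensorAlgebra.equivMonoidAlgebraFreeMonoid b
  have hφ_pow : φ (TensorAlgebra.ι ℤ (b s₀) ^ n) = single (FreeMonoid.of s₀ ^ n) 1 := by
    rw [map_pow, TensorAlgebra.equivMonoidAlgebraFreeMonoid_ι_basis, single_pow, one_pow]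
  have hdeg : φ x ∈ supported ℤ ℤ {w | w.length = n} :=
    TensorAlgebra.map_range_ι_pow_le_supported b n (Submodule.mem_map_of_mem hx)
  have hcomm_pow : Commute (single (FreeMonoid.of s₀ ^ n) 1) (φ x) :=
    hφ_pow ▸ ((Commute.pow_left hcomm n).map φ)
  have hsupp : (φ x).coeff.support ⊆ {FreeMonoid.of s₀ ^ n} := by
    intro v hv
    obtain ⟨w, -, hvw⟩ := exists_mem_support_mul_eq_of_commute_single hcomm_pow hv
    have hlen : v.length = n := hdeg hv
    rw [← hlen] at hvw ⊢
    exact Finset.mem_singleton.2 (FreeMonoid.eq_of_pow_of_mul_eq hvw)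
  refine ⟨(φ x).coeff (FreeMonoid.of s₀ ^ n), φ.injective ?_⟩
  rw [map_zsmul, hφ_pow, smul_single, smul_eq_mul, mul_one]
  exact MonoidAlgebra.ext (Finsupp.support_subset_singleton.mp hsupp)

/-- Let `M` be a free ℤ-module with basis indexed by `S` (with `|S| ≥ 2`) and let
`a = b s₀` be a basis element.  If a homogeneous element `x` of degree `n` of the
tensor algebra `T[M]` satisfies `a ⊗ x = x ⊗ a`, then `x` is an integer multiple of
`a^{⊗n}`. -/
theorem homogeneous_commutes_with_basis_element (S : Type*) (M : Type*)
    [AddCommGroup M] [Module ℤ M] (b : Module.Basis S ℤ M) (s₀ : S) (hS : ∃ s : S, s ≠ s₀)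
    (n : ℕ) (x : TensorAlgebra ℤ M)
    (hx : x ∈ (LinearMap.range (TensorAlgebra.ι ℤ : M →ₗ[ℤ] TensorAlgebra ℤ M)) ^ n)
    (hcomm : TensorAlgebra.ι ℤ (b s₀) * x = x * TensorAlgebra.ι ℤ (b s₀)) :
    ∃ k : ℤ, x = k • (TensorAlgebra.ι ℤ (b s₀)) ^ n :=
  homogeneous_commutes_with_basis_element_general S M b s₀ n x hx hcomm
end

section
/- In the Lie algebra L(n) (the quotient of the free Lie algebra on B_{i,j}, 1 ≤ i < j ≤ n, by the infinitesimal braid relations), the Lie subalgebra generated by {B_{1,n}, …, B_{n-1,n}} is a Lie ideal of L(n). -/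
open FreeLieAlgebra

/-- Index set for the generators `B_{i,j}`, `1 ≤ i < j ≤ n`, of the pure braid Lie algebra. -/
abbrev PBGen (n : ℕ) : Type := {p : Fin n × Fin n // p.1 < p.2}

/-- The generator `B_{i,j}` in the free Lie algebra, with the convention `B_{j,i} = B_{i,j}`
(and `B_{i,i} = 0`, never used). -/
noncomputable def Bpre {n : ℕ} (i j : Fin n) : FreeLieAlgebra ℤ (PBGen n) :=
  if h : i < j then FreeLieAlgebra.of ℤ ⟨(i, j), h⟩
  else if h' : j < i then FreeLieAlgebra.of ℤ ⟨(j, i), h'⟩ else 0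

/-- The infinitesimal braid relations. -/
def pbRelations (n : ℕ) : Set (FreeLieAlgebra ℤ (PBGen n)) :=
  {x | ∃ i j s t : Fin n, ({i, j} ∩ {s, t} : Set (Fin n)) = ∅ ∧
      x = ⁅Bpre i j, Bpre s t⁆} ∪
  {x | ∃ i j s : Fin n, i ≠ j ∧ j ≠ s ∧ i ≠ s ∧
      x = ⁅Bpre i j, Bpre i s + Bpre s j⁆}

/-- The Lie ideal generated by the infinitesimal braid relations. -/
noncomputable def pbIdeal (n : ℕ) : LieIdeal ℤ (FreeLieAlgebra ℤ (PBGen n)) :=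
  LieSubmodule.lieSpan ℤ (FreeLieAlgebra ℤ (PBGen n)) (pbRelations n)

/-- `L(n)`, the holonomy Lie algebra of the pure braid arrangement. -/
abbrev LnAlg (n : ℕ) : Type := FreeLieAlgebra ℤ (PBGen n) ⧸ pbIdeal n

/-- The class of `B_{i,j}` in `L(n)`. -/
noncomputable def Bq {n : ℕ} (i j : Fin n) : LnAlg n :=
  LieSubmodule.Quotient.mk' (pbIdeal n) (Bpre i j)

/-- `Δ(n) = Σ_{1 ≤ i < j ≤ n} B_{i,j}` in `L(n)`. -/
noncomputable def Delta (n : ℕ) : LnAlg n :=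
  ∑ p : PBGen n, LieSubmodule.Quotient.mk' (pbIdeal n) (FreeLieAlgebra.of ℤ p)

/-!
Write `K` for the Lie subalgebra generated by the `B_{p,k}`, `p ≠ k`. Since `L(n)` is generated by
the `B_{i,j}` and the normalizer of `K` is a Lie subalgebra, it suffices that every `B_{i,j}`
normalizes `K`, and for that it suffices that `⁅B_{i,j}, B_{p,k}⁆ ∈ K` for all `p`. When `k ∈ {i, j}`
this is clear. Otherwise the bracket vanishes by the first relation unless `p ∈ {i, j}`, and in
that case the second relation rewrites `⁅B_{i,j}, B_{i,k}⁆` as `⁅B_{i,k}, B_{j,k}⁆ ∈ K`.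
-/

open LieSubalgebra

theorem FreeLieAlgebra.lieSpan_range_of_s8 (R X : Type*) [CommRing R] :
    lieSpan R (FreeLieAlgebra R X) (Set.range (of R)) = ⊤ := by
  set K := lieSpan R (FreeLieAlgebra R X) (Set.range (of R))
  let f : FreeLieAlgebra R X →ₗ⁅R⁆ K := lift R fun x => ⟨of R x, subset_lieSpan ⟨x, rfl⟩⟩
  have hf : K.incl.comp f = LieHom.id := hom_ext fun x => by simp [f]
  refine eq_top_iff.2 fun z _ => ?_
  have hz : (f z : FreeLieAlgebra R X) = z := LieHom.congr_fun hf z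
  exact hz ▸ (f z).2

theorem LieSubalgebra.mem_normalizer_lieSpan_of_forall_lie_mem {R L : Type*} [CommRing R]
    [LieRing L] [LieAlgebra R L] {s : Set L} {a : L} (h : ∀ x ∈ s, ⁅a, x⁆ ∈ lieSpan R L s) :
    a ∈ (lieSpan R L s).normalizer := by
  rw [mem_normalizer_iff]
  intro y hy
  induction hy using lieSpan_induction with
  | mem x hx => exact h x hx
  | zero => simpa only [lie_zero] using zero_mem _
  | add x y _ _ hx hy => simpa only [lie_add] using add_mem hx hy
  | smul t x _ hx => simpa only [lie_smul] using SMulMemClass.smul_mem t hx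
  | lie x y hx' hy' hx hy =>
    rw [leibniz_lie]
    exact add_mem (lie_mem _ hx hy') (lie_mem _ hx' hy)

namespace LnAlg

variable {n : ℕ}

theorem Bq_comm (i j : Fin n) : Bq i j = Bq j i := by
  unfold Bq Bpre
  rcases lt_trichotomy i j with h | rfl | h
  · simp [h, h.not_gt]
  · rfl
  · simp [h, h.not_gt]

@[simp]
theorem Bq_self (i : Fin n) : Bq i i = 0 := by
  simp [Bq, Bpre]

theorem mk'_of (p : PBGen n) :
    LieSubmodule.Quotient.mk' (pbIdeal n) (FreeLieAlgebra.of ℤ p) = Bq p.1.1 p.1.2 := by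
  simp [Bq, Bpre, p.2]

theorem mk'_eq_zero_of_mem_pbRelations {r : FreeLieAlgebra ℤ (PBGen n)} (hr : r ∈ pbRelations n) :
    LieSubmodule.Quotient.mk' (pbIdeal n) r = 0 :=
  (LieSubmodule.Quotient.mk_eq_zero _).2 (LieSubmodule.subset_lieSpan hr)

theorem lie_Bq_eq_zero {i j s t : Fin n} (his : i ≠ s) (hit : i ≠ t) (hjs : j ≠ s)
    (hjt : j ≠ t) : ⁅Bq i j, Bq s t⁆ = 0 := by
  have hdisj : ({i, j} ∩ {s, t} : Set (Fin n)) = ∅ := by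
    ext a
    simp only [Set.mem_inter_iff, Set.mem_insert_iff, Set.mem_singleton_iff,
      Set.mem_empty_iff_false, iff_false, not_and]
    rintro (rfl | rfl) <;> rintro (rfl | rfl) <;> contradiction
  exact mk'_eq_zero_of_mem_pbRelations (Or.inl ⟨i, j, s, t, hdisj, rfl⟩)

theorem lie_Bq_add_Bq {i j s : Fin n} (hij : i ≠ j) (hjs : j ≠ s) (his : i ≠ s) :
    ⁅Bq i j, Bq i s + Bq s j⁆ = 0 :=
  mk'_eq_zero_of_mem_pbRelations (Or.inr ⟨i, j, s, hij, hjs, his, rfl⟩)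

theorem lie_Bq_Bq_left {i j k : Fin n} (hij : i ≠ j) (hik : i ≠ k) (hjk : j ≠ k) :
    ⁅Bq i j, Bq i k⁆ = ⁅Bq i k, Bq j k⁆ := by
  have h := lie_Bq_add_Bq hik hjk.symm hij
  rw [lie_add, add_eq_zero_iff_eq_neg] at h
  rw [← lie_skew, h, neg_neg]

theorem lieSpan_Bq_eq_top (n : ℕ) : lieSpan ℤ (LnAlg n) {z | ∃ i j, z = Bq i j} = ⊤ := by
  let π : FreeLieAlgebra ℤ (PBGen n) →ₗ⁅ℤ⁆ LnAlg n :=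
    { LieSubmodule.Quotient.mk' (pbIdeal n) with map_lie' := rfl }
  have hπ : lieSpan ℤ _ (Set.range (FreeLieAlgebra.of ℤ)) ≤
      (lieSpan ℤ (LnAlg n) {z | ∃ i j, z = Bq i j}).comap π := by
    rw [lieSpan_le]
    rintro _ ⟨p, rfl⟩
    exact subset_lieSpan ⟨p.1.1, p.1.2, mk'_of p⟩
  refine eq_top_iff.2 fun x _ => ?_
  obtain ⟨z, rfl⟩ := LieSubmodule.Quotient.surjective_mk' (pbIdeal n) x
  exact hπ (eq_top_iff.1 (FreeLieAlgebra.lieSpan_range_of_s8 ℤ (PBGen n)) trivial)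

def starGens (k : Fin n) : Set (LnAlg n) := {z | ∃ p, p ≠ k ∧ z = Bq p k}

theorem Bq_mem_lieSpan_starGens {p k : Fin n} (hp : p ≠ k) :
    Bq p k ∈ lieSpan ℤ (LnAlg n) (starGens k) :=
  subset_lieSpan ⟨p, hp, rfl⟩

theorem lie_Bq_mem_lieSpan_starGens {i j k : Fin n} (hik : i ≠ k) (hjk : j ≠ k) (p : Fin n) :
    ⁅Bq i j, Bq p k⁆ ∈ lieSpan ℤ (LnAlg n) (starGens k) := by
  by_cases hij : i = j
  · simp [hij]
  by_cases hpk : p = k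
  · simp [hpk]
  by_cases hpi : p = i
  · rw [hpi, lie_Bq_Bq_left hij hik hjk]
    exact lie_mem _ (Bq_mem_lieSpan_starGens hik) (Bq_mem_lieSpan_starGens hjk)
  by_cases hpj : p = j
  · rw [hpj, Bq_comm i j, lie_Bq_Bq_left (Ne.symm hij) hjk hik]
    exact lie_mem _ (Bq_mem_lieSpan_starGens hjk) (Bq_mem_lieSpan_starGens hik)
  rw [lie_Bq_eq_zero (Ne.symm hpi) hik (Ne.symm hpj) hjk]
  exact zero_mem _

theorem Bq_mem_normalizer_lieSpan_starGens (k i j : Fin n) :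
    Bq i j ∈ (lieSpan ℤ (LnAlg n) (starGens k)).normalizer := by
  by_cases hij : i = j
  · simp [hij]
  by_cases hjk : j = k
  · subst hjk
    exact le_normalizer _ (Bq_mem_lieSpan_starGens hij)
  by_cases hik : i = k
  · subst hik
    rw [Bq_comm]
    exact le_normalizer _ (Bq_mem_lieSpan_starGens (Ne.symm hij))
  refine mem_normalizer_lieSpan_of_forall_lie_mem ?_
  rintro _ ⟨p, -, rfl⟩
  exact lie_Bq_mem_lieSpan_starGens hik hjk p

theorem normalizer_lieSpan_starGens (k : Fin n) :
    (lieSpan ℤ (LnAlg n) (starGens k)).normalizer = ⊤ := by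
  rw [eq_top_iff, ← lieSpan_Bq_eq_top, lieSpan_le]
  rintro _ ⟨i, j, rfl⟩
  exact Bq_mem_normalizer_lieSpan_starGens k i j

end LnAlg

/-- The Lie subalgebra of `L(n+1)` generated by `{B_{1,n}, …, B_{n-1,n}}` is a Lie ideal. -/
theorem top_subalgebra_is_ideal (n : ℕ) (x y : LnAlg (n + 1))
    (hy : y ∈ LieSubalgebra.lieSpan ℤ (LnAlg (n + 1))
      {z | ∃ p : Fin (n + 1), p ≠ Fin.last n ∧ z = Bq p (Fin.last n)}) :
    ⁅x, y⁆ ∈ LieSubalgebra.lieSpan ℤ (LnAlg (n + 1))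
      {z | ∃ p : Fin (n + 1), p ≠ Fin.last n ∧ z = Bq p (Fin.last n)} := by
  have hx : x ∈ (lieSpan ℤ (LnAlg (n + 1)) (LnAlg.starGens (Fin.last n))).normalizer := by
    rw [LnAlg.normalizer_lieSpan_starGens]
    trivial
  exact ideal_in_normalizer hx hy
end

section
/- In L(n) with n > 2, if a degree-1 element x = Σ_{1 ≤ i < j ≤ n} α_{i,j} B_{i,j} (with integer coefficients α_{i,j}) satisfies [x, B_{p,n}] = 0 for all 1 ≤ p ≤ n-1, then all coefficients α_{i,j} are equal, i.e., x is an integer multiple of Δ(n) = Σ_{i<j} B_{i,j}. -/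
open FreeLieAlgebra

/-!
Fix three distinct strands `a, b, c` and elements `u, v` of a Lie ring. Put the weights
`u, v, -(u + v)` on `a, b, c`, send each `B_{i,j}` with both ends in the triangle to the sum
of the weights of its ends and every other generator to `0`. Since the weights sum to zero and
two edges of a triangle always meet, this respects the infinitesimal braid relations. Applied to
`⁅x, B_{b,c}⁆ = 0` it yields `(α_{a,b} - α_{a,c}) • ⁅u, v⁆ = 0`, and in the Heisenberg algebra
`⁅E₀₁, E₁₂⁆ = E₀₂` has infinite order, so `α_{a,b} = α_{a,c}`. Taking `c` to be the last strand,
`α_{a,b} = α_{a,n}` for all `b ≠ n`, which forces all coefficients to be equal.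
-/

namespace PBGen

variable {m : ℕ}

def edge {i j : Fin m} (h : i ≠ j) : PBGen m :=
  if hl : i < j then ⟨(i, j), hl⟩ else ⟨(j, i), h.lt_or_gt.resolve_left hl⟩

theorem edge_of_lt {i j : Fin m} (h : i < j) : edge h.ne = ⟨(i, j), h⟩ :=
  dif_pos h

theorem edge_comm {i j : Fin m} (h : i ≠ j) : edge h = edge h.symm := by
  rcases h.lt_or_gt with hl | hl
  · rw [edge, dif_pos hl, edge, dif_neg (asymm hl)]
  · rw [edge, dif_neg (asymm hl), edge, dif_pos hl]

theorem eq_edge_iff (p : PBGen m) {i j : Fin m} (h : i ≠ j) :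
    p = edge h ↔ p.1.1 = i ∧ p.1.2 = j ∨ p.1.1 = j ∧ p.1.2 = i := by
  obtain ⟨⟨s, t⟩, hst⟩ := p
  rcases h.lt_or_gt with hl | hl
  · rw [edge, dif_pos hl, Subtype.mk.injEq, Prod.mk.injEq]
    constructor
    · exact Or.inl
    · rintro (h' | ⟨rfl, rfl⟩)
      · exact h'
      · exact absurd hst (asymm hl)
  · rw [edge, dif_neg (asymm hl), Subtype.mk.injEq, Prod.mk.injEq]
    constructor
    · exact Or.inr
    · rintro (⟨rfl, rfl⟩ | h')
      · exact absurd hst (asymm hl)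
      · exact h'

theorem apply_eq_of_edge_eq_edge {β : Type*} {N : Fin m} (f : PBGen m → β)
    (h : ∀ a b (hab : a ≠ b) (haN : a ≠ N), b ≠ N → f (edge hab) = f (edge haN))
    (p q : PBGen m) : f p = f q := by
  have star : ∀ x y (hx : x ≠ N) (hy : y ≠ N), f (edge hx) = f (edge hy) := by
    intro x y hx hy
    obtain rfl | hxy := eq_or_ne x y
    · rfl
    calc f (edge hx) = f (edge hxy) := (h x y hxy hx hy).symm
      _ = f (edge hxy.symm) := by rw [edge_comm]
      _ = f (edge hy) := h y x hxy.symm hy hx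
  have toStar : ∀ p : PBGen m, ∃ x, ∃ hx : x ≠ N, f p = f (edge hx) := by
    rintro ⟨⟨i, j⟩, hij⟩
    rw [← edge_of_lt hij]
    obtain rfl | hiN := eq_or_ne i N
    · exact ⟨j, hij.ne', by rw [edge_comm]⟩
    obtain rfl | hjN := eq_or_ne j N
    · exact ⟨i, hiN, rfl⟩
    · exact ⟨i, hiN, h i j hij.ne hiN hjN⟩
  obtain ⟨x, hx, hpx⟩ := toStar p
  obtain ⟨y, hy, hqy⟩ := toStar q
  rw [hpx, hqy, star x y hx hy]

end PBGen

section TriangleHom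

variable {L : Type*} [LieRing L] {m : ℕ}

def triangleGen (S : Finset (Fin m)) (w : Fin m → L) (i j : Fin m) : L :=
  if i ≠ j ∧ i ∈ S ∧ j ∈ S then w i + w j else 0

noncomputable def triangleHom (S : Finset (Fin m)) (w : Fin m → L) :
    FreeLieAlgebra ℤ (PBGen m) →ₗ⁅ℤ⁆ L :=
  lift ℤ fun p => triangleGen S w p.1.1 p.1.2

theorem triangleGen_comm (S : Finset (Fin m)) (w : Fin m → L) (i j : Fin m) :
    triangleGen S w i j = triangleGen S w j i := by
  simp only [triangleGen, ne_comm, add_comm (w i)]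
  congr 1
  exact propext (by tauto)

theorem triangleHom_of (S : Finset (Fin m)) (w : Fin m → L) (p : PBGen m) :
    triangleHom S w (of ℤ p) = triangleGen S w p.1.1 p.1.2 :=
  lift_of_apply _ _

theorem triangleHom_Bpre (S : Finset (Fin m)) (w : Fin m → L) (i j : Fin m) :
    triangleHom S w (Bpre i j) = triangleGen S w i j := by
  rcases lt_trichotomy i j with h | rfl | h
  · rw [Bpre, dif_pos h, triangleHom_of]
  · simp [Bpre, triangleGen]
  · rw [Bpre, dif_neg (asymm h), dif_pos h, triangleHom_of, triangleGen_comm]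

variable {S : Finset (Fin m)} {w : Fin m → L}

theorem lie_triangleGen_of_disjoint (hS : S.card = 3) {i j s t : Fin m}
    (hdisj : ({i, j} ∩ {s, t} : Set (Fin m)) = ∅) :
    ⁅triangleGen S w i j, triangleGen S w s t⁆ = 0 := by
  by_cases h₁ : i ≠ j ∧ i ∈ S ∧ j ∈ S
  · by_cases h₂ : s ≠ t ∧ s ∈ S ∧ t ∈ S
    · exfalso
      obtain ⟨⟨his, hit⟩, hjs, hjt⟩ : (i ≠ s ∧ i ≠ t) ∧ j ≠ s ∧ j ≠ t := by
        simpa [Set.eq_empty_iff_forall_notMem] using hdisj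
      have h4 : ({i, j, s, t} : Finset (Fin m)).card = 4 :=
        Finset.card_eq_four.mpr ⟨i, j, s, t, h₁.1, his, hit, hjs, hjt, h₂.1, rfl⟩
      have := Finset.card_le_card (s := {i, j, s, t}) (t := S)
        (by simp [Finset.insert_subset_iff, h₁, h₂])
      omega
    · simp [triangleGen, h₂]
  · simp [triangleGen, h₁]

theorem lie_triangleGen_add_triangleGen (hS : S.card = 3) (hw : ∑ x ∈ S, w x = 0)
    {i j s : Fin m} (hij : i ≠ j) (hjs : j ≠ s) (his : i ≠ s) :
    ⁅triangleGen S w i j, triangleGen S w i s + triangleGen S w s j⁆ = 0 := by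
  by_cases hijS : i ∈ S ∧ j ∈ S
  · by_cases hsS : s ∈ S
    · have hS' : ({i, j, s} : Finset (Fin m)) = S :=
        Finset.eq_of_subset_of_card_le (by simp [Finset.insert_subset_iff, hijS, hsS])
          (by rw [hS]; exact (Finset.card_eq_three.mpr ⟨i, j, s, hij, his, hjs, rfl⟩).ge)
      have hsum : w i + w j + w s = 0 := by
        rw [← hw, ← hS', Finset.sum_insert (by simp [hij, his]), Finset.sum_pair hjs, add_assoc]
      have hE : triangleGen S w i s + triangleGen S w s j = w s := by
        rw [triangleGen, triangleGen, if_pos (⟨his, hijS.1, hsS⟩ : i ≠ s ∧ i ∈ S ∧ s ∈ S),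
          if_pos (⟨hjs.symm, hsS, hijS.2⟩ : s ≠ j ∧ s ∈ S ∧ j ∈ S)]
        linear_combination (norm := abel) hsum
      rw [hE, triangleGen, if_pos (⟨hij, hijS⟩ : i ≠ j ∧ i ∈ S ∧ j ∈ S),
        eq_neg_of_add_eq_zero_left hsum, neg_lie, lie_self, neg_zero]
    · simp [triangleGen, hsS]
  · rw [triangleGen, if_neg (by tauto), zero_lie]

theorem pbIdeal_le_ker_triangleHom (hS : S.card = 3) (hw : ∑ x ∈ S, w x = 0) :
    pbIdeal m ≤ (triangleHom S w).ker := by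
  refine LieSubmodule.lieSpan_le.mpr ?_
  rintro r (⟨i, j, s, t, hdisj, rfl⟩ | ⟨i, j, s, hij, hjs, his, rfl⟩)
  · simp only [SetLike.mem_coe, LieHom.mem_ker, LieHom.map_lie, triangleHom_Bpre]
    exact lie_triangleGen_of_disjoint hS hdisj
  · simp only [SetLike.mem_coe, LieHom.mem_ker, LieHom.map_lie, map_add, triangleHom_Bpre]
    exact lie_triangleGen_add_triangleGen hS hw hij hjs his

def triangleWeight (a b : Fin m) (u v : L) (x : Fin m) : L :=
  if x = a then u else if x = b then v else -(u + v)

variable {a b c : Fin m}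

theorem lie_triangleWeight_neg (hab : a ≠ b) (hac : a ≠ c) (hbc : b ≠ c) (u v : L)
    {x : Fin m} (hx : x ∈ ({a, b, c} : Finset (Fin m))) :
    ⁅triangleWeight a b u v x, -u⁆ =
      ((if x = b then 1 else 0) - (if x = c then 1 else 0) : ℤ) • ⁅u, v⁆ := by
  simp only [Finset.mem_insert, Finset.mem_singleton] at hx
  rcases hx with rfl | rfl | rfl
  · simp [triangleWeight, hab, hac]
  · simp [triangleWeight, hab.symm, hbc]
  · simp [triangleWeight, hac.symm, hbc.symm, add_lie]

theorem lie_triangleGen_neg (hab : a ≠ b) (hac : a ≠ c) (hbc : b ≠ c) (u v : L)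
    (p : PBGen m) :
    ⁅triangleGen {a, b, c} (triangleWeight a b u v) p.1.1 p.1.2, -u⁆ =
      ((if p = PBGen.edge hab then 1 else 0) - (if p = PBGen.edge hac then 1 else 0) : ℤ) •
        ⁅u, v⁆ := by
  obtain ⟨⟨i, j⟩, hij⟩ := p
  simp only [PBGen.eq_edge_iff]
  by_cases h : i ≠ j ∧ i ∈ ({a, b, c} : Finset (Fin m)) ∧ j ∈ ({a, b, c} : Finset (Fin m))
  · rw [triangleGen, if_pos h, add_lie, lie_triangleWeight_neg hab hac hbc u v h.2.1,
      lie_triangleWeight_neg hab hac hbc u v h.2.2, ← add_smul]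
    obtain ⟨hne, hi, hj⟩ := h
    simp only [Finset.mem_insert, Finset.mem_singleton] at hi hj
    congr 1
    rcases hi with rfl | rfl | rfl <;> rcases hj with rfl | rfl | rfl <;>
      simp [hab, hac, hbc, hab.symm, hac.symm, hbc.symm] at hne ⊢
  · rw [triangleGen, if_neg h, zero_lie, if_neg, if_neg, sub_zero, zero_smul] <;>
    · rintro (⟨rfl, rfl⟩ | ⟨rfl, rfl⟩) <;> simp_all

theorem smul_lie_eq_zero_of_lie_mem_pbIdeal
    (hab : a ≠ b) (hac : a ≠ c) (hbc : b ≠ c) {α : PBGen m → ℤ}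
    (H : ⁅∑ p, α p • of ℤ p, Bpre b c⁆ ∈ pbIdeal m) (u v : L) :
    (α (PBGen.edge hab) - α (PBGen.edge hac)) • ⁅u, v⁆ = 0 := by
  set φ := triangleHom {a, b, c} (triangleWeight a b u v)
  have hcard : ({a, b, c} : Finset (Fin m)).card = 3 :=
    Finset.card_eq_three.mpr ⟨a, b, c, hab, hac, hbc, rfl⟩
  have hw : ∑ x ∈ {a, b, c}, triangleWeight a b u v x = 0 := by
    rw [Finset.sum_insert (by simp [hab, hac]), Finset.sum_pair hbc]
    simp [triangleWeight, hab.symm, hac.symm, hbc.symm]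
  have hBc : φ (Bpre b c) = -u := by
    rw [triangleHom_Bpre, triangleGen, if_pos (by simp [hbc])]
    simp [triangleWeight, hab.symm, hac.symm, hbc.symm]
  calc (α (PBGen.edge hab) - α (PBGen.edge hac)) • ⁅u, v⁆
      = ∑ p, α p • ⁅φ (of ℤ p), -u⁆ := by
        simp only [φ, triangleHom_of, lie_triangleGen_neg hab hac hbc, smul_smul, mul_sub,
          mul_ite, mul_one, mul_zero, ← Finset.sum_smul, Finset.sum_sub_distrib,
          Finset.sum_ite_eq', Finset.mem_univ, if_true]
    _ = φ ⁅∑ p, α p • of ℤ p, Bpre b c⁆ := by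
        rw [LieHom.map_lie, hBc, map_sum, sum_lie]
        simp only [map_smul, smul_lie]
    _ = 0 := pbIdeal_le_ker_triangleHom hcard hw H

end TriangleHom

theorem coeff_edge_eq_of_lie_mem_pbIdeal {m : ℕ} {a b c : Fin m}
    (hab : a ≠ b) (hac : a ≠ c) (hbc : b ≠ c) {α : PBGen m → ℤ}
    (H : ⁅∑ p, α p • of ℤ p, Bpre b c⁆ ∈ pbIdeal m) :
    α (PBGen.edge hab) = α (PBGen.edge hac) := by
  let := LieRing.ofAssociativeRing (A := Matrix (Fin 3) (Fin 3) ℤ)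
  have h := congrFun (congrFun (smul_lie_eq_zero_of_lie_mem_pbIdeal hab hac hbc H
    (Matrix.single 0 1 1 : Matrix (Fin 3) (Fin 3) ℤ) (Matrix.single 1 2 1)) 0) 2
  simpa [LieRing.of_associative_ring_bracket, sub_eq_zero] using h

theorem exists_sum_smul_eq_smul_sum {ι M : Type*} [Fintype ι] [AddCommGroup M] {α : ι → ℤ}
    (hα : ∀ p q, α p = α q) (g : ι → M) : ∃ c : ℤ, ∑ p, α p • g p = c • ∑ p, g p := by
  obtain _ | ⟨⟨p₀⟩⟩ := isEmpty_or_nonempty ι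
  · exact ⟨0, by simp⟩
  · exact ⟨α p₀, by rw [Finset.smul_sum]; simp_rw [hα _ p₀]⟩

theorem degree_one_centralizer_general (n : ℕ) (α : PBGen (n + 1) → ℤ)
    (x : LnAlg (n + 1))
    (hx : x = ∑ p : PBGen (n + 1),
      α p • LieSubmodule.Quotient.mk' (pbIdeal (n + 1)) (FreeLieAlgebra.of ℤ p))
    (hcomm : ∀ p : Fin n, ⁅x, Bq p.castSucc (Fin.last n)⁆ = 0) :
    (∀ p q : PBGen (n + 1), α p = α q) ∧ ∃ c : ℤ, x = c • Delta (n + 1) := by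
  have hx' : x = LieSubmodule.Quotient.mk' (pbIdeal (n + 1)) (∑ p, α p • of ℤ p) := by
    simp [hx]
  have hmem : ∀ b ≠ Fin.last n, ⁅∑ p, α p • of ℤ p, Bpre b (Fin.last n)⁆ ∈ pbIdeal (n + 1) := by
    intro b hb
    obtain ⟨b, rfl⟩ := Fin.exists_castSucc_eq.mpr hb
    rw [← LieSubmodule.Quotient.mk_eq_zero, LieSubmodule.Quotient.mk'_apply,
      LieSubmodule.Quotient.mk_bracket, ← LieSubmodule.Quotient.mk'_apply, ← hx']
    exact hcomm b
  have hconst : ∀ p q : PBGen (n + 1), α p = α q :=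
    PBGen.apply_eq_of_edge_eq_edge α fun a b hab haN hbN =>
      coeff_edge_eq_of_lie_mem_pbIdeal hab haN hbN (hmem b hbN)
  exact ⟨hconst, by simpa [hx, Delta] using exists_sum_smul_eq_smul_sum hconst _⟩

/-- If a degree-1 element `x = Σ α_{i,j} B_{i,j}` of `L(n+1)` (with `n + 1 > 2`) commutes
with every `B_{p,n+1}`, then all coefficients `α_{i,j}` are equal, i.e. `x` is an integer
multiple of `Δ(n+1)`. -/
theorem degree_one_centralizer (n : ℕ) (hn : 2 ≤ n) (α : PBGen (n + 1) → ℤ)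
    (x : LnAlg (n + 1))
    (hx : x = ∑ p : PBGen (n + 1),
      α p • LieSubmodule.Quotient.mk' (pbIdeal (n + 1)) (FreeLieAlgebra.of ℤ p))
    (hcomm : ∀ p : Fin n, ⁅x, Bq p.castSucc (Fin.last n)⁆ = 0) :
    (∀ p q : PBGen (n + 1), α p = α q) ∧ ∃ c : ℤ, x = c • Delta (n + 1) :=
  degree_one_centralizer_general n α x hx hcomm
end

section
/- Let f: P → G be a group homomorphism where P is residually nilpotent, and suppose the associated graded Lie ring E₀^*(P) has the property that every nonzero element x with [x, w] = 0 for all w in a fixed Lie ideal W lies in a subspace Z on which E₀^*(f) is injective, and E₀^*(f) restricted to W is injective. Then E₀^*(f) is injective and hence f is injective. -/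
/-!
An element `x ∈ Γₖ` with `f x ∈ Γₖ₊₁(G)` brackets every `w ∈ W_q` into `W_{k+q+1}`, and
`f ⁅x, w⁆ = ⁅f x, f w⁆ ∈ Γ_{k+q+2}(G)`; injectivity on `W` then puts `⁅x, w⁆` in `Γ_{k+q+2}`, so the
class of `x` centralizes `W`, and injectivity on the centralizer gives `x ∈ Γₖ₊₁`.  Thus `E₀^*(f)` is
injective, so `ker f` lies in every `Γₖ`, which is trivial by residual nilpotence.
-/

open Subgroup
open scoped commutatorElement

namespace Subgroup

variable {G : Type*} [Group G]

theorem commutator_commutator_le_of_rotate {H₁ H₂ H₃ N : Subgroup G} [N.Normal]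
    (h₁ : ⁅⁅H₂, H₃⁆, H₁⁆ ≤ N) (h₂ : ⁅⁅H₃, H₁⁆, H₂⁆ ≤ N) : ⁅⁅H₁, H₂⁆, H₃⁆ ≤ N := by
  have modN : ∀ A B C : Subgroup G,
      ⁅⁅A, B⁆, C⁆ ≤ N ↔ ⁅⁅A.map (QuotientGroup.mk' N), B.map (QuotientGroup.mk' N)⁆,
        C.map (QuotientGroup.mk' N)⁆ = ⊥ := fun A B C => by
    rw [← map_commutator, ← map_commutator, map_eq_bot_iff, QuotientGroup.ker_mk']
  rw [modN] at h₁ h₂ ⊢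
  exact commutator_commutator_eq_bot_of_rotate h₁ h₂

theorem commutator_lowerCentralSeries_le (m n : ℕ) :
    ⁅(⊤ : Subgroup G).lowerCentralSeries m, (⊤ : Subgroup G).lowerCentralSeries n⁆ ≤
      (⊤ : Subgroup G).lowerCentralSeries (m + n + 1) := by
  induction n generalizing m with
  | zero => exact le_rfl
  | succ n ih =>
    -- three subgroups lemma for `⁅⁅Γₙ, ⊤⁆, Γₘ⁆`, both rotations being instances of `ih`
    rw [commutator_comm, lowerCentralSeries_succ]
    refine commutator_commutator_le_of_rotate ?_ ?_
    · rw [commutator_comm ⊤, ← lowerCentralSeries_succ,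
        show m + (n + 1) + 1 = m + 1 + n + 1 by omega]
      exact ih (m + 1)
    · exact commutator_mono (ih m) le_rfl

theorem map_mem_lowerCentralSeries {G' : Type*} [Group G'] (f : G →* G') {n : ℕ} {x : G}
    (hx : x ∈ (⊤ : Subgroup G).lowerCentralSeries n) :
    f x ∈ (⊤ : Subgroup G').lowerCentralSeries n := by
  have hmap := mem_map_of_mem f hx
  rw [map_lowerCentralSeries] at hmap
  exact lowerCentralSeries_mono n le_top hmap

end Subgroup

theorem MonoidHom.injective_of_lowerCentralSeries {P G : Type*} [Group P] [Group G] (f : P →* G)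
    (hres : (⨅ k : ℕ, (⊤ : Subgroup P).lowerCentralSeries k) = ⊥)
    (hgr : ∀ k : ℕ, ∀ x ∈ (⊤ : Subgroup P).lowerCentralSeries k,
      f x ∈ (⊤ : Subgroup G).lowerCentralSeries (k + 1) →
        x ∈ (⊤ : Subgroup P).lowerCentralSeries (k + 1)) :
    Function.Injective f := by
  have ker_le : ∀ k, f.ker ≤ (⊤ : Subgroup P).lowerCentralSeries k := by
    intro k
    induction k with
    | zero => exact le_top
    | succ k ih =>
      intro x hx
      exact hgr k x (ih hx) ((f.mem_ker.mp hx).symm ▸ one_mem _)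
  rw [← f.ker_eq_bot_iff, eq_bot_iff, ← hres]
  exact le_iInf ker_le

theorem injective_of_injective_on_ideal_and_centralizer_general {P G : Type*} [Group P]
    [Group G] (f : P →* G) (hres : (⨅ k : ℕ, (⊤ : Subgroup P).lowerCentralSeries k) = ⊥)
    (W : ℕ → Set P)
    (hW : ∀ k, W k ⊆ (⊤ : Subgroup P).lowerCentralSeries k)
    (hWideal : ∀ p q : ℕ, ∀ x ∈ (⊤ : Subgroup P).lowerCentralSeries p, ∀ w ∈ W q,
      ⁅x, w⁆ ∈ W (p + q + 1))
    -- `E₀^*(f)` is injective on the ideal `W`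
    (hWinj : ∀ k, ∀ x ∈ W k,
      f x ∈ (⊤ : Subgroup G).lowerCentralSeries (k + 1) → x ∈ (⊤ : Subgroup P).lowerCentralSeries (k + 1))
    -- `E₀^*(f)` is injective on the centralizer `Z` of `W`
    (hZinj : ∀ k, ∀ x ∈ (⊤ : Subgroup P).lowerCentralSeries k,
      (∀ q : ℕ, ∀ w ∈ W q, ⁅x, w⁆ ∈ (⊤ : Subgroup P).lowerCentralSeries (k + q + 2)) →
      f x ∈ (⊤ : Subgroup G).lowerCentralSeries (k + 1) → x ∈ (⊤ : Subgroup P).lowerCentralSeries (k + 1)) :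
    (∀ k : ℕ, ∀ x ∈ (⊤ : Subgroup P).lowerCentralSeries k,
      f x ∈ (⊤ : Subgroup G).lowerCentralSeries (k + 1) → x ∈ (⊤ : Subgroup P).lowerCentralSeries (k + 1)) ∧
    Function.Injective f := by
  have hgr : ∀ k : ℕ, ∀ x ∈ (⊤ : Subgroup P).lowerCentralSeries k,
      f x ∈ (⊤ : Subgroup G).lowerCentralSeries (k + 1) →
        x ∈ (⊤ : Subgroup P).lowerCentralSeries (k + 1) := by
    intro k x hx hfx
    refine hZinj k x hx (fun q w hw => hWinj _ _ (hWideal k q x hx w hw) ?_) hfx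
    have hbracket := commutator_lowerCentralSeries_le (k + 1) q
      (commutator_mem_commutator hfx (map_mem_lowerCentralSeries f (hW q hw)))
    rwa [← map_commutatorElement, Nat.add_right_comm k 1 q] at hbracket
  exact ⟨hgr, f.injective_of_lowerCentralSeries hres hgr⟩

/-- Let `f : P → G` be a homomorphism with `P` residually nilpotent.  The associated
graded Lie ring `E₀^*(P)` of the lower central series is described degreewise:
`E₀^{k+1}(P) = Γ^{k+1}(P)/Γ^{k+2}(P)` where `Γ^{k+1} = (⊤ : Subgroup P).lowerCentralSeries k`.
Let `W` be a Lie ideal of `E₀^*(P)`, encoded as a family of subsets `W k` of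
`Γ^{k+1}(P)` which are unions of cosets of `Γ^{k+2}(P)` and satisfy the ideal
condition `[Γ^{p+1}, W q] ⊆ W (p+q+1)` (in filtration degree `p+q+2`).  Suppose that
`E₀^*(f)` is injective on `W` and injective on the centralizer `Z` of `W` (every `x`
whose brackets with all elements of `W` vanish in the associated graded lies in `Z`,
and `E₀^*(f)` is injective there).  Then `E₀^*(f)` is injective and hence `f` is
injective. -/
theorem injective_of_injective_on_ideal_and_centralizer {P G : Type*} [Group P]
    [Group G] (f : P →* G) (hres : (⨅ k : ℕ, (⊤ : Subgroup P).lowerCentralSeries k) = ⊥)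
    (W : ℕ → Set P)
    (hW : ∀ k, W k ⊆ (⊤ : Subgroup P).lowerCentralSeries k)
    (hWcoset : ∀ k, ∀ x ∈ W k, ∀ y ∈ (⊤ : Subgroup P).lowerCentralSeries (k + 1), x * y ∈ W k)
    (hWideal : ∀ p q : ℕ, ∀ x ∈ (⊤ : Subgroup P).lowerCentralSeries p, ∀ w ∈ W q,
      ⁅x, w⁆ ∈ W (p + q + 1))
    -- `E₀^*(f)` is injective on the ideal `W`
    (hWinj : ∀ k, ∀ x ∈ W k,
      f x ∈ (⊤ : Subgroup G).lowerCentralSeries (k + 1) → x ∈ (⊤ : Subgroup P).lowerCentralSeries (k + 1))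
    -- `E₀^*(f)` is injective on the centralizer `Z` of `W`
    (hZinj : ∀ k, ∀ x ∈ (⊤ : Subgroup P).lowerCentralSeries k,
      (∀ q : ℕ, ∀ w ∈ W q, ⁅x, w⁆ ∈ (⊤ : Subgroup P).lowerCentralSeries (k + q + 2)) →
      f x ∈ (⊤ : Subgroup G).lowerCentralSeries (k + 1) → x ∈ (⊤ : Subgroup P).lowerCentralSeries (k + 1)) :
    (∀ k : ℕ, ∀ x ∈ (⊤ : Subgroup P).lowerCentralSeries k,
      f x ∈ (⊤ : Subgroup G).lowerCentralSeries (k + 1) → x ∈ (⊤ : Subgroup P).lowerCentralSeries (k + 1)) ∧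
    Function.Injective f :=
  injective_of_injective_on_ideal_and_centralizer_general f hres W hW hWideal hWinj hZinj
end
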